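/- Let ν be the Haar probability measure on the orthogonal group O(2) of 2×2 real orthogonal matrices. There exists a constant c > 0 such that for all real numbers x₁, x₂, y₁, y₂, ∫_{O(2)} exp(tr(X O Y Oᵀ)) dν(O) = c · e^{(x₁+x₂)(y₁+y₂)/2} · Σ_{k=0}^{∞} (τ/2)^{2k}/(k!)², where X = diag(x₁,x₂), Y = diag(y₁,y₂), and τ = −(x₁−x₂)(y₁−y₂)/2. -/

import Mathlib

/-!
For orthogonal `O` one has `tr (X O Y Oᵀ) = ∑ᵢⱼ xᵢ yⱼ Oᵢⱼ²`, and in dimension two all the squared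
entries are determined by `O₀₀²`, so the integrand is `e^{x₁y₂ + x₂y₁} e^{t O₀₀²}` with
`t = (x₁ - x₂)(y₁ - y₂)`. Averaging over the left translates of `O` by the rotations `R_θ`
(Haar invariance and Fubini) shows that `O₀₀` is distributed like `cos θ` with `θ` uniform on
`[0, 2π]`. Finally `cos² θ = (1 + cos 2θ) / 2`, and integrating the exponential series of
`e^{s cos θ}` term by term with `∫ cos^{2k} = 2π (2k)! / (4ᵏ k!²)` gives `2π I₀(s)`.
So the constant is `c = 1`.
-/

open MeasureTheory Matrix

noncomputable instance {n : ℕ} : MeasurableSpace (Matrix (Fin n) (Fin n) ℝ) :=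
  inferInstanceAs (MeasurableSpace (Fin n → Fin n → ℝ))

open Real intervalIntegral
open scoped Nat

lemma integral_cos_pow_two_mul (k : ℕ) :
    ∫ x in (0 : ℝ)..2 * π, cos x ^ (2 * k) = 2 * π * ((2 * k)! / (4 ^ k * (k ! : ℝ) ^ 2)) := by
  induction k with
  | zero => simp
  | succ k ih =>
    rw [show 2 * (k + 1) = 2 * k + 2 by ring, integral_cos_pow, ih]
    simp only [sin_two_pi, sin_zero, Nat.factorial_succ]
    push_cast
    field_simp
    ring

lemma integral_cos_pow_two_mul_add_one (k : ℕ) :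
    ∫ x in (0 : ℝ)..2 * π, cos x ^ (2 * k + 1) = 0 := by
  induction k with
  | zero => simp
  | succ k ih =>
    rw [show 2 * (k + 1) + 1 = 2 * k + 1 + 2 by ring, integral_cos_pow, ih]
    simp

lemma hasSum_integral_exp_mul_cos (s : ℝ) :
    HasSum (fun n : ℕ => s ^ n / n ! * ∫ x in (0 : ℝ)..2 * π, cos x ^ n)
      (∫ x in (0 : ℝ)..2 * π, exp (s * cos x)) := by
  simp_rw [← intervalIntegral.integral_const_mul]
  refine hasSum_integral_of_dominated_convergence (fun n _ => |s| ^ n / n !)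
    (fun n => by fun_prop) (fun n => ae_of_all _ fun x _ => ?_)
    (ae_of_all _ fun _ _ => summable_pow_div_factorial |s|) intervalIntegrable_const
    (ae_of_all _ fun x _ => ?_)
  · rw [norm_mul, norm_div, norm_pow, norm_pow, norm_natCast, norm_eq_abs, norm_eq_abs]
    have : |cos x| ^ n ≤ 1 := pow_le_one₀ (abs_nonneg _) (abs_cos_le_one x)
    have : 0 ≤ |s| ^ n / n ! := by positivity
    nlinarith
  · simpa only [exp_eq_exp_ℝ, mul_pow, div_mul_eq_mul_div]
      using NormedSpace.expSeries_div_hasSum_exp (s * cos x)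

lemma integral_exp_mul_cos (s : ℝ) :
    ∫ x in (0 : ℝ)..2 * π, exp (s * cos x)
      = 2 * π * ∑' k : ℕ, (s / 2) ^ (2 * k) / (k ! : ℝ) ^ 2 := by
  have hodd (n : ℕ) (hn : n ∉ Set.range (2 * ·)) :
      s ^ n / n ! * ∫ x in (0 : ℝ)..2 * π, cos x ^ n = 0 := by
    obtain ⟨k, rfl⟩ : Odd n := Nat.not_even_iff_odd.mp fun ⟨k, hk⟩ => hn ⟨k, by simp only; omega⟩
    rw [integral_cos_pow_two_mul_add_one, mul_zero]
  have heven := ((mul_right_injective₀ two_ne_zero).hasSum_iff hodd).mpr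
    (hasSum_integral_exp_mul_cos s)
  rw [← heven.tsum_eq, ← tsum_mul_left]
  congr 1 with k
  rw [Function.comp_apply, integral_cos_pow_two_mul, div_pow, pow_mul, pow_mul]
  field_simp
  ring

lemma integral_comp_cos_two_mul {g : ℝ → ℝ} (hg : Continuous g) :
    ∫ x in (0 : ℝ)..2 * π, g (cos (2 * x)) = ∫ x in (0 : ℝ)..2 * π, g (cos x) := by
  have hper : Function.Periodic (fun x => g (cos x)) (2 * π) := fun x => by simp [cos_periodic x]
  have htwo := hper.intervalIntegral_add_zsmul_eq 2 0
    fun _ _ => (hg.comp continuous_cos).intervalIntegrable _ _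
  simp only [zero_add, two_zsmul, ← two_mul] at htwo
  rw [integral_comp_mul_left (fun x => g (cos x)) two_ne_zero, mul_zero, htwo, smul_eq_mul,
    inv_mul_cancel_left₀ two_ne_zero]

lemma integral_exp_mul_cos_sq (t : ℝ) :
    ∫ x in (0 : ℝ)..2 * π, exp (t * cos x ^ 2)
      = 2 * π * exp (t / 2) * ∑' k : ℕ, (t / 4) ^ (2 * k) / (k ! : ℝ) ^ 2 := by
  have h (x : ℝ) : exp (t * cos x ^ 2) = exp (t / 2) * exp (t / 2 * cos (2 * x)) := by
    rw [← exp_add, cos_sq x]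
    ring_nf
  simp_rw [h, intervalIntegral.integral_const_mul,
    integral_comp_cos_two_mul (g := fun y => exp (t / 2 * y)) (by fun_prop), integral_exp_mul_cos]
  ring_nf

lemma integral_comp_cos_mul_sub_sin_mul (g : ℝ → ℝ) {a c : ℝ} (h : a ^ 2 + c ^ 2 = 1) :
    ∫ θ in (0 : ℝ)..2 * π, g (cos θ * a - sin θ * c) = ∫ θ in (0 : ℝ)..2 * π, g (cos θ) := by
  set z : ℂ := ⟨a, c⟩
  have hz : ‖z‖ = 1 := by
    rw [Complex.norm_def, Complex.normSq_mk, ← sq, ← sq, h, sqrt_one]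
  have hcos : cos z.arg = a := by simpa [hz] using Complex.norm_mul_cos_arg z
  have hsin : sin z.arg = c := by simpa [hz] using Complex.norm_mul_sin_arg z
  have hper : Function.Periodic (fun x => g (cos x)) (2 * π) := fun x => by simp [cos_periodic x]
  simp_rw [← hcos, ← hsin, ← cos_add]
  rw [integral_comp_add_right (fun x => g (cos x)), zero_add, add_comm (2 * π),
    hper.intervalIntegral_add_eq z.arg 0, zero_add]

theorem MeasureTheory.integral_eq_integral_integral_mul_left {G α E : Type*} [Group G]
    [MeasurableSpace G] [MeasurableMul G] [MeasurableSpace α] [NormedAddCommGroup E]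
    [NormedSpace ℝ E] [CompleteSpace E] (ν : Measure G) [ν.IsMulLeftInvariant] [SFinite ν]
    (μ : Measure α) [SFinite μ] (r : α → G) (f : G → E)
    (hf : Integrable (fun p : α × G => f (r p.1 * p.2)) (μ.prod ν)) :
    μ.real Set.univ • ∫ g, f g ∂ν = ∫ g, ∫ a, f (r a * g) ∂μ ∂ν := by
  rw [← integral_integral_swap hf]
  simp_rw [integral_mul_left_eq_self]
  rw [MeasureTheory.integral_const]

instance (n : ℕ) : BorelSpace (Matrix (Fin n) (Fin n) ℝ) :=
  inferInstanceAs (BorelSpace (Fin n → Fin n → ℝ))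

namespace Matrix

variable {n R : Type*} [Fintype n] [DecidableEq n]

theorem trace_diagonal_mul_mul_diagonal_mul_transpose [CommRing R] (x y : n → R)
    (A : Matrix n n R) :
    trace (diagonal x * A * diagonal y * Aᵀ) = ∑ i, ∑ j, x i * y j * A i j ^ 2 := by
  simp only [trace, diag_apply, mul_apply, diagonal_apply, ite_mul, zero_mul, mul_ite, mul_zero,
    Finset.sum_ite_eq, Finset.sum_ite_eq', Finset.mem_univ, if_true, transpose_apply]
  exact Finset.sum_congr rfl fun i _ => Finset.sum_congr rfl fun j _ => by ring

attribute [local instance] starRingOfComm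

theorem sum_sq_apply_right_of_mem_orthogonalGroup [CommRing R] {A : Matrix n n R}
    (hA : A ∈ orthogonalGroup n R) (i : n) : ∑ j, A i j ^ 2 = 1 := by
  simpa [mul_apply, sq] using congr_fun₂ ((mem_orthogonalGroup_iff n R).mp hA) i i

theorem sum_sq_apply_left_of_mem_orthogonalGroup [CommRing R] {A : Matrix n n R}
    (hA : A ∈ orthogonalGroup n R) (j : n) : ∑ i, A i j ^ 2 = 1 := by
  simpa [mul_apply, sq] using congr_fun₂ ((mem_orthogonalGroup_iff' n R).mp hA) j j

theorem abs_apply_le_one_of_mem_orthogonalGroup {A : Matrix n n ℝ}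
    (hA : A ∈ orthogonalGroup n ℝ) (i j : n) : |A i j| ≤ 1 := by
  rw [← sq_le_one_iff_abs_le_one, ← sum_sq_apply_right_of_mem_orthogonalGroup hA i]
  exact Finset.single_le_sum (fun k _ => sq_nonneg (A i k)) (Finset.mem_univ j)

theorem trace_diagonal_mul_mul_diagonal_mul_transpose_fin_two [CommRing R]
    (x₁ x₂ y₁ y₂ : R) {A : Matrix (Fin 2) (Fin 2) R} (hA : A ∈ orthogonalGroup (Fin 2) R) :
    trace (diagonal ![x₁, x₂] * A * diagonal ![y₁, y₂] * Aᵀ)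
      = x₁ * y₂ + x₂ * y₁ + (x₁ - x₂) * (y₁ - y₂) * A 0 0 ^ 2 := by
  have hrow := sum_sq_apply_right_of_mem_orthogonalGroup hA 0
  have hcol₀ := sum_sq_apply_left_of_mem_orthogonalGroup hA 0
  have hcol₁ := sum_sq_apply_left_of_mem_orthogonalGroup hA 1
  simp only [trace_diagonal_mul_mul_diagonal_mul_transpose, Fin.sum_univ_two] at hrow hcol₀ hcol₁ ⊢
  simp only [Matrix.cons_val_zero, Matrix.cons_val_one]
  linear_combination (x₁ * y₂) * hrow + (x₂ * y₁) * hcol₀ + (x₂ * y₂) * hcol₁ - (x₂ * y₂) * hrow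

noncomputable def rotation (θ : ℝ) : orthogonalGroup (Fin 2) ℝ :=
  ⟨!![cos θ, -sin θ; sin θ, cos θ], specialUnitaryGroup_le_unitaryGroup <|
    of_mem_specialOrthogonalGroup_fin_two_iff.mpr ⟨rfl, rfl, by rw [neg_sq, cos_sq_add_sin_sq]⟩⟩

theorem rotation_mul_apply_zero_zero (θ : ℝ) (O : orthogonalGroup (Fin 2) ℝ) :
    ((rotation θ * O : orthogonalGroup (Fin 2) ℝ) : Matrix (Fin 2) (Fin 2) ℝ) 0 0
      = cos θ * (O : Matrix (Fin 2) (Fin 2) ℝ) 0 0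
        - sin θ * (O : Matrix (Fin 2) (Fin 2) ℝ) 1 0 := by
  simp [rotation, mul_apply, Fin.sum_univ_two]
  ring

theorem integral_comp_apply_zero_zero (ν : Measure (orthogonalGroup (Fin 2) ℝ))
    [ν.IsMulLeftInvariant] [IsProbabilityMeasure ν] {g : ℝ → ℝ} (hg : Continuous g) :
    ∫ O, g ((O : Matrix (Fin 2) (Fin 2) ℝ) 0 0) ∂ν
      = (2 * π)⁻¹ * ∫ θ in (0 : ℝ)..2 * π, g (cos θ) := by
  let μ := volume.restrict (Set.Ioc 0 (2 * π))
  have hμ : μ.real Set.univ = 2 * π := by simp [μ, measureReal_def, pi_pos.le]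
  obtain ⟨C, hC⟩ := (isCompact_Icc (a := (-1 : ℝ)) (b := 1)).exists_bound_of_continuousOn
    hg.continuousOn
  have hint : Integrable (fun p : ℝ × orthogonalGroup (Fin 2) ℝ =>
      g (((rotation p.1 * p.2 : orthogonalGroup (Fin 2) ℝ) : Matrix (Fin 2) (Fin 2) ℝ) 0 0))
      (μ.prod ν) := by
    refine Integrable.of_bound ?_ C (ae_of_all _ fun p => hC _ ?_)
    · simp_rw [rotation_mul_apply_zero_zero]
      have hO (i j : Fin 2) : Continuous fun p : ℝ × orthogonalGroup (Fin 2) ℝ =>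
          (p.2 : Matrix (Fin 2) (Fin 2) ℝ) i j :=
        (continuous_subtype_val.comp continuous_snd).matrix_elem i j
      exact (hg.comp ((continuous_cos.comp continuous_fst).mul (hO 0 0) |>.sub
        ((continuous_sin.comp continuous_fst).mul (hO 1 0)))).aestronglyMeasurable
    · exact abs_le.mp (abs_apply_le_one_of_mem_orthogonalGroup (rotation p.1 * p.2).2 0 0)
  have hinner (O : orthogonalGroup (Fin 2) ℝ) :
      ∫ θ, g (cos θ * (O : Matrix (Fin 2) (Fin 2) ℝ) 0 0
        - sin θ * (O : Matrix (Fin 2) (Fin 2) ℝ) 1 0) ∂μ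
        = ∫ θ in (0 : ℝ)..2 * π, g (cos θ) := by
    rw [← integral_comp_cos_mul_sub_sin_mul g, integral_of_le two_pi_pos.le]
    simpa [Fin.sum_univ_two] using sum_sq_apply_left_of_mem_orthogonalGroup O.2 0
  have havg := integral_eq_integral_integral_mul_left ν μ rotation
    (fun O => g ((O : Matrix (Fin 2) (Fin 2) ℝ) 0 0)) hint
  simp only [rotation_mul_apply_zero_zero, hinner, MeasureTheory.integral_const, probReal_univ,
    hμ, smul_eq_mul, one_mul] at havg
  rw [← havg]
  field_simp

theorem integral_exp_mul_sq_apply_zero_zero (ν : Measure (orthogonalGroup (Fin 2) ℝ))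
    [ν.IsMulLeftInvariant] [IsProbabilityMeasure ν] (t : ℝ) :
    ∫ O, exp (t * (O : Matrix (Fin 2) (Fin 2) ℝ) 0 0 ^ 2) ∂ν
      = exp (t / 2) * ∑' k : ℕ, (t / 4) ^ (2 * k) / (k ! : ℝ) ^ 2 := by
  rw [integral_comp_apply_zero_zero ν (g := fun y => exp (t * y ^ 2)) (by fun_prop),
    integral_exp_mul_cos_sq]
  field_simp

end Matrix

theorem statement17 (ν : Measure (Matrix.orthogonalGroup (Fin 2) ℝ))
    [ν.IsHaarMeasure] [IsProbabilityMeasure ν] :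
    ∃ c : ℝ, 0 < c ∧ ∀ x₁ x₂ y₁ y₂ : ℝ,
      (∫ O : Matrix.orthogonalGroup (Fin 2) ℝ,
        Real.exp (Matrix.trace (Matrix.diagonal ![x₁, x₂] *
          (O : Matrix (Fin 2) (Fin 2) ℝ) * Matrix.diagonal ![y₁, y₂] *
          (O : Matrix (Fin 2) (Fin 2) ℝ)ᵀ)) ∂ν) =
      c * Real.exp ((x₁ + x₂) * (y₁ + y₂) / 2) *
        ∑' k : ℕ, (-(x₁ - x₂) * (y₁ - y₂) / 2 / 2) ^ (2 * k) / (Nat.factorial k : ℝ) ^ 2 := by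
  refine ⟨1, one_pos, fun x₁ x₂ y₁ y₂ => ?_⟩
  simp_rw [trace_diagonal_mul_mul_diagonal_mul_transpose_fin_two _ _ _ _
    (SetLike.coe_mem _), exp_add, MeasureTheory.integral_const_mul,
    integral_exp_mul_sq_apply_zero_zero]
  have hτ (k : ℕ) : (-(x₁ - x₂) * (y₁ - y₂) / 2 / 2) ^ (2 * k)
      = ((x₁ - x₂) * (y₁ - y₂) / 4) ^ (2 * k) := by
    rw [← (even_two_mul k).neg_pow]
    ring_nf
  simp_rw [hτ, mul_assoc, ← mul_assoc (exp _), ← exp_add]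
  ring_nf
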